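/- arXiv:1405.2135 — 2 statements merged into one kernel-verified Lean document; each statement's English description precedes it below -/
import Mathlib

section
/- Converse of Goss's duality theorem: let F be a field of characteristic p > 0, complete with respect to a non-Archimedean norm. Let H be an additive generator with a two-sided composition inverse Hinv (Hinv∘H = T = H∘Hinv) which is also an additive generator. Let u, v : ℕ → F be null sequences with u_0 = v_0 = 1. If (Flow(u,P))∘H = Flow(v, P∘H) holds for every bounded P ∈ F⟦T⟧, then for every k ≥ 0, v_k = ∑_{m≥0} (coeff_m(Hinv^k))·u_m (these sums converging in F). -/
/-!
Apply the duality to the bounded series `P = Hinv ^ k`. Composition with `H` is multiplicative,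
so `P ∘ H = (Hinv ∘ H) ^ k = T ^ k`. Composition with `H` preserves constant coefficients, and the
constant coefficient of `Flow(u, P)` is `∑ₘ u_m a_m`, while that of `Flow(v, T ^ k)` is `v_k`.
-/

open Filter

/-- Composition `P ∘ H` of power series, for `H` with zero constant
coefficient. -/
noncomputable def psComp {F : Type*} [Field F] (P H : PowerSeries F) : PowerSeries F :=
  PowerSeries.mk fun n => ∑ k ∈ Finset.range (n + 1),
    PowerSeries.coeff k P * PowerSeries.coeff n (H ^ k)

/-- The flow of the umbra `u` applied to the power series `P`: the `n`-th
coefficient is the (convergent) sum `∑_k choose(n+k,k)·u_k·a_{n+k}`. -/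
noncomputable def psFlow {F : Type*} [NormedField F] (u : ℕ → F) (P : PowerSeries F) :
    PowerSeries F :=
  PowerSeries.mk fun n =>
    ∑' k : ℕ, ((n + k).choose k : F) * u k * PowerSeries.coeff (n + k) P

/-- An additive generator: zero constant coefficient, supported on exponents
that are powers of `p`, all coefficients of norm at most `1`, and coefficient
of `T` of norm exactly `1`. -/
def IsAddGen {F : Type*} [NormedField F] (p : ℕ) (H : PowerSeries F) : Prop :=
  PowerSeries.constantCoeff H = 0 ∧
    (∀ n : ℕ, (¬ ∃ m : ℕ, n = p ^ m) → PowerSeries.coeff n H = 0) ∧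
    (∀ n : ℕ, ‖PowerSeries.coeff n H‖ ≤ 1) ∧ ‖PowerSeries.coeff 1 H‖ = 1

open PowerSeries

section Composition

variable {F : Type*} [Field F] {H : PowerSeries F}

theorem coeff_pow_eq_zero_of_lt (hH : constantCoeff H = 0) {n k : ℕ} (h : n < k) :
    coeff n (H ^ k) = 0 :=
  coeff_of_lt_order n <|
    (Nat.cast_lt.mpr h).trans_le (le_order_pow_of_constantCoeff_eq_zero k hH)

theorem psComp_eq_subst (hH : constantCoeff H = 0) (P : PowerSeries F) :
    psComp P H = P.subst H := by
  ext n
  rw [psComp, coeff_mk, coeff_subst' (HasSubst.of_constantCoeff_zero' hH),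
    finsum_eq_sum_of_support_subset (s := Finset.range (n + 1))]
  · simp only [smul_eq_mul]
  · refine Function.support_subset_iff'.mpr fun d hd => ?_
    rw [Finset.coe_range, Set.mem_Iio, not_lt] at hd
    rw [coeff_pow_eq_zero_of_lt hH hd, smul_zero]

theorem psComp_pow (hH : constantCoeff H = 0) (P : PowerSeries F) (k : ℕ) :
    psComp (P ^ k) H = psComp P H ^ k := by
  simp only [psComp_eq_subst hH, subst_pow (HasSubst.of_constantCoeff_zero' hH)]

theorem coeff_zero_psComp (P H : PowerSeries F) : coeff 0 (psComp P H) = coeff 0 P := by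
  simp [psComp]

end Composition

section Flow

variable {F : Type*} [NormedField F]

theorem coeff_zero_psFlow (u : ℕ → F) (P : PowerSeries F) :
    coeff 0 (psFlow u P) = ∑' k, coeff k P * u k := by
  simp [psFlow, mul_comm]

theorem coeff_zero_psFlow_X_pow (u : ℕ → F) (k : ℕ) : coeff 0 (psFlow u (X ^ k)) = u k := by
  rw [coeff_zero_psFlow, tsum_eq_single k fun j hj => by simp [coeff_X_pow, hj]]
  simp

end Flow

section Ultrametric

variable {F : Type*} [NormedField F] [IsUltrametricDist F]

theorem norm_coeff_pow_le_one {f : PowerSeries F} (hf : ∀ n, ‖coeff n f‖ ≤ 1) (k n : ℕ) :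
    ‖coeff n (f ^ k)‖ ≤ 1 := by
  induction k generalizing n with
  | zero =>
    rw [pow_zero, coeff_one]
    split <;> simp
  | succ k ih =>
    rw [pow_succ, coeff_mul]
    refine IsUltrametricDist.norm_sum_le_of_forall_le_of_nonneg zero_le_one fun p _ => ?_
    rw [norm_mul]
    exact mul_le_one₀ (ih p.1) (norm_nonneg _) (hf p.2)

theorem summable_mul_of_norm_le_of_tendsto_zero [CompleteSpace F] {a u : ℕ → F} {C : ℝ}
    (ha : ∀ m, ‖a m‖ ≤ C) (hu : Tendsto u atTop (nhds 0)) : Summable fun m => a m * u m := by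
  refine NonarchimedeanAddGroup.summable_of_tendsto_cofinite_zero ?_
  rw [Nat.cofinite_eq_atTop]
  have hCu : Tendsto (fun m => C * ‖u m‖) atTop (nhds 0) := by
    simpa using (tendsto_zero_iff_norm_tendsto_zero.mp hu).const_mul C
  refine squeeze_zero_norm (fun m => ?_) hCu
  rw [norm_mul]
  exact mul_le_mul_of_nonneg_right (ha m) (norm_nonneg _)

end Ultrametric

theorem goss_duality_converse_general {F : Type*} [NormedField F] [CompleteSpace F]
    (hna : ∀ x y : F, ‖x + y‖ ≤ max ‖x‖ ‖y‖)
    (p : ℕ)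
    (H Hinv : PowerSeries F) (hH : IsAddGen p H) (hHinv : IsAddGen p Hinv)
    (hinv₁ : psComp Hinv H = PowerSeries.X)
    (u v : ℕ → F) (hu : Tendsto u atTop (nhds 0))
    (hdual : ∀ P : PowerSeries F, (∃ c : ℝ, 0 < c ∧
        ∀ n : ℕ, ‖PowerSeries.coeff n P‖ < c) →
      psComp (psFlow u P) H = psFlow v (psComp P H)) :
    ∀ k : ℕ,
      (Summable fun m : ℕ => PowerSeries.coeff m (Hinv ^ k) * u m) ∧
        v k = ∑' m : ℕ, PowerSeries.coeff m (Hinv ^ k) * u m := by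
  have : IsUltrametricDist F := .isUltrametricDist_of_forall_norm_add_le_max_norm hna
  intro k
  have hbound : ∀ m, ‖coeff m (Hinv ^ k)‖ ≤ 1 := norm_coeff_pow_le_one hHinv.2.2.1 k
  refine ⟨summable_mul_of_norm_le_of_tendsto_zero hbound hu, ?_⟩
  have hconj := hdual (Hinv ^ k) ⟨2, two_pos, fun n => (hbound n).trans_lt one_lt_two⟩
  rw [psComp_pow hH.1, hinv₁] at hconj
  have hcoeff := congrArg (coeff 0) hconj
  rwa [coeff_zero_psComp, coeff_zero_psFlow, coeff_zero_psFlow_X_pow, eq_comm] at hcoeff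

/-- Converse of Goss's duality theorem: if the flow of `v` is conjugate to the
flow of `u` under the additive isomorphism generated by `H` on all bounded
power series, then `v_k = ∑_m coeff_m(Hinv^k)·u_m` for every `k`, these sums
converging in `F`. -/
theorem goss_duality_converse {F : Type*} [NormedField F] [CompleteSpace F]
    (hna : ∀ x y : F, ‖x + y‖ ≤ max ‖x‖ ‖y‖)
    (p : ℕ) (hp : p.Prime) (hchar : CharP F p)
    (H Hinv : PowerSeries F) (hH : IsAddGen p H) (hHinv : IsAddGen p Hinv)
    (hinv₁ : psComp Hinv H = PowerSeries.X) (hinv₂ : psComp H Hinv = PowerSeries.X)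
    (u v : ℕ → F) (hu : Tendsto u atTop (nhds 0)) (hv : Tendsto v atTop (nhds 0))
    (hu0 : u 0 = 1) (hv0 : v 0 = 1)
    (hdual : ∀ P : PowerSeries F, (∃ c : ℝ, 0 < c ∧
        ∀ n : ℕ, ‖PowerSeries.coeff n P‖ < c) →
      psComp (psFlow u P) H = psFlow v (psComp P H)) :
    ∀ k : ℕ,
      (Summable fun m : ℕ => PowerSeries.coeff m (Hinv ^ k) * u m) ∧
        v k = ∑' m : ℕ, PowerSeries.coeff m (Hinv ^ k) * u m :=
  goss_duality_converse_general hna p H Hinv hH hHinv hinv₁ u v hu hdual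
end

section
/- Binomial sequences give one-parameter flows: let F be a field complete with respect to a non-Archimedean norm, and let b, c : ℕ → F be null sequences with b_0 = c_0 = 1. Define d : ℕ → F by d_n := ∑_{k=0}^{n} choose(n,k)·b_k·c_{n-k}. Then d is a null sequence with d_0 = 1, and for every bounded P ∈ F⟦T⟧ one has Flow(d,P) = Flow(b, Flow(c,P)). (Applied to an umbral map satisfying the binomial theorem this says 𝒟_ℱ(x+y) = 𝒟_ℱ(x)∘𝒟_ℱ(y).) -/
/-!
In a complete non-Archimedean field a family is summable exactly when it tends to zero along
the cofinite filter, and integer multiples never increase the norm. Hence for bounded `P` the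
double family `(j, i) ↦ C(n+j, j) b_j · C(n+j+i, i) c_i · a_{n+j+i}` is summable, because
`b_j c_i → 0`. Summing it by rows gives the `n`-th coefficient of `Flow(b, Flow(c, P))`; summing
it along the antidiagonals `j + i = m` gives that of `Flow(d, P)`, by the trinomial identity
`C(n+j, j) C(n+m, i) = C(n+m, m) C(m, j)`. The same regrouping applied to `C(j+i, j) b_j c_i`
shows that `d` is summable, hence null.
-/

open Filter

open Finset Topology

theorem HasSum.sum_antidiagonal {A α : Type*} [AddCommMonoid A] [HasAntidiagonal A]
    [AddCommMonoid α] [TopologicalSpace α] [ContinuousAdd α] [RegularSpace α]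
    {f : A × A → α} {a : α} (hf : HasSum f a) :
    HasSum (fun n ↦ ∑ p ∈ antidiagonal n, f p) a :=
  (HasAntidiagonal.sigmaAntidiagonalEquivProd.hasSum_iff.mpr hf).sigma fun n ↦
    (antidiagonal n).hasSum f

theorem Nat.choose_add_mul_choose_add (n j i : ℕ) :
    (n + j).choose j * (n + j + i).choose i = (n + (j + i)).choose (j + i) * (j + i).choose j := by
  have h1 := Nat.choose_mul (n := n + j + i) (k := n + j) (s := j) (by omega)
  have h2 := Nat.choose_mul (n := n + j + i) (k := j + i) (s := j) (by omega)
  rw [show n + j + i - j = n + i by omega, Nat.add_sub_cancel] at h1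
  rw [show n + j + i - j = n + i by omega, Nat.add_sub_cancel_left] at h2
  rw [← add_assoc, mul_comm, ← Nat.choose_symm_add, h1, h2, Nat.choose_symm_add]

def binomialConv {R : Type*} [Semiring R] (b c : ℕ → R) (n : ℕ) : R :=
  ∑ p ∈ antidiagonal n, (n.choose p.1 : R) * b p.1 * c p.2

section Ultrametric

variable {F : Type*} [NormedField F] [IsUltrametricDist F]

theorem Filter.Tendsto.natCast_mul_of_isUltrametricDist {α : Type*} {l : Filter α} {f : α → F}
    (hf : Tendsto f l (𝓝 0)) (k : α → ℕ) : Tendsto (fun x ↦ (k x : F) * f x) l (𝓝 0) :=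
  squeeze_zero_norm (fun _ ↦ (norm_mul_le _ _).trans
    (mul_le_of_le_one_left (norm_nonneg _) (IsUltrametricDist.norm_natCast_le_one F _)))
    (tendsto_zero_iff_norm_tendsto_zero.mp hf)

variable [CompleteSpace F]

theorem tendsto_binomialConv {b c : ℕ → F} (hb : Tendsto b atTop (𝓝 0))
    (hc : Tendsto c atTop (𝓝 0)) : Tendsto (binomialConv b c) atTop (𝓝 0) := by
  rw [← Nat.cofinite_eq_atTop] at hb hc
  have hsum : Summable fun p : ℕ × ℕ ↦ ((p.1 + p.2).choose p.1 : F) * (b p.1 * c p.2) :=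
    NonarchimedeanAddGroup.summable_of_tendsto_cofinite_zero
      ((tendsto_mul_cofinite_nhds_zero hb hc).natCast_mul_of_isUltrametricDist _)
  refine hsum.hasSum.sum_antidiagonal.summable.tendsto_atTop_zero.congr fun n ↦
    sum_congr rfl fun p hp ↦ ?_
  rw [HasAntidiagonal.mem_antidiagonal] at hp
  subst hp
  ring

theorem psFlow_psFlow {b c : ℕ → F} (hb : Tendsto b atTop (𝓝 0))
    (hc : Tendsto c atTop (𝓝 0)) {P : PowerSeries F} {C : ℝ}
    (hP : ∀ n, ‖PowerSeries.coeff n P‖ ≤ C) :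
    psFlow b (psFlow c P) = psFlow (binomialConv b c) P := by
  rw [← Nat.cofinite_eq_atTop] at hb hc
  ext n
  set G : ℕ × ℕ → F := fun p ↦
    (((n + p.1).choose p.1 * (n + p.1 + p.2).choose p.2 : ℕ) : F) *
      (b p.1 * c p.2 * PowerSeries.coeff (n + p.1 + p.2) P)
  have hG : Summable G := by
    refine NonarchimedeanAddGroup.summable_of_tendsto_cofinite_zero
      (Tendsto.natCast_mul_of_isUltrametricDist ?_ _)
    exact (tendsto_mul_cofinite_nhds_zero hb hc).zero_mul_isBoundedUnder_le
      (isBoundedUnder_of ⟨C, fun p ↦ hP _⟩)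
  have hleft : PowerSeries.coeff n (psFlow b (psFlow c P)) = ∑' p, G p := by
    simp only [psFlow, PowerSeries.coeff_mk, hG.tsum_prod, G, ← tsum_mul_left]
    refine tsum_congr fun j ↦ tsum_congr fun i ↦ ?_
    push_cast
    ring
  have hright : PowerSeries.coeff n (psFlow (binomialConv b c) P) = ∑' p, G p := by
    simp only [psFlow, PowerSeries.coeff_mk, binomialConv, ← hG.hasSum.sum_antidiagonal.tsum_eq]
    refine tsum_congr fun m ↦ ?_
    rw [mul_sum, sum_mul]
    refine sum_congr rfl fun p hp ↦ ?_
    rw [HasAntidiagonal.mem_antidiagonal] at hp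
    subst hp
    simp only [G, Nat.choose_add_mul_choose_add]
    push_cast
    rw [add_assoc]
    ring
  rw [hleft, hright]

end Ultrametric

/-- Binomial sequences give one-parameter flows: if
`d_n = ∑_{k=0}^n choose(n,k)·b_k·c_{n-k}` for null sequences `b, c` with
`b_0 = c_0 = 1`, then `d` is a null sequence with `d_0 = 1` and
`Flow(d,P) = Flow(b, Flow(c,P))` for every bounded `P`. -/
theorem flow_binomial {F : Type*} [NormedField F] [CompleteSpace F]
    (hna : ∀ x y : F, ‖x + y‖ ≤ max ‖x‖ ‖y‖)
    (b c : ℕ → F) (hb : Tendsto b atTop (nhds 0)) (hc : Tendsto c atTop (nhds 0))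
    (hb0 : b 0 = 1) (hc0 : c 0 = 1)
    (d : ℕ → F)
    (hd : ∀ n : ℕ, d n = ∑ k ∈ Finset.range (n + 1), (n.choose k : F) * b k * c (n - k)) :
    Tendsto d atTop (nhds 0) ∧ d 0 = 1 ∧
      ∀ P : PowerSeries F,
        (∃ C : ℝ, 0 < C ∧ ∀ n : ℕ, ‖PowerSeries.coeff n P‖ < C) →
        psFlow d P = psFlow b (psFlow c P) := by
  have : IsUltrametricDist F :=
    IsUltrametricDist.isUltrametricDist_of_forall_norm_add_le_max_norm hna
  obtain rfl : d = binomialConv b c := funext fun n ↦ by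
    rw [hd, binomialConv,
      Nat.sum_antidiagonal_eq_sum_range_succ fun j i ↦ (n.choose j : F) * b j * c i]
  refine ⟨tendsto_binomialConv hb hc, by simp [binomialConv, hb0, hc0], fun P ⟨C, _, hC⟩ ↦ ?_⟩
  exact (psFlow_psFlow hb hc fun n ↦ (hC n).le).symm
end
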